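/- arXiv:2007.03736 — 2 statements merged into one kernel-verified Lean document; each statement's English description precedes it below -/
import Mathlib

section
/- Let μ be a finite Borel measure on ℝ^d with closed support K_μ, let Λ ⊂ ℝ^d be countable, let φ : K_μ → ℝ^d be Borel measurable, and let ν = φ_*μ be the pushforward measure. Then E(Λ, φ) = {x ↦ e^{2πi λ·φ(x)} : λ ∈ Λ} is an orthogonal basis for L²(μ) if and only if φ is μ-essentially injective and ν is a spectral measure with spectrum Λ. -/
open MeasureTheory Filter Set
open scoped Real ENNReal Topology

noncomputable section

/-- `e2pi t = e^{2π i t}`. -/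
def e2pi (t : ℝ) : ℂ := Complex.exp (2 * Real.pi * Complex.I * t)

/-- The Euclidean dot product on `Fin d → ℝ`. -/
def dotp {d : ℕ} (a b : Fin d → ℝ) : ℝ := ∑ i, a i * b i

/-- `φ` is `μ`-essentially injective. -/
def EssInj {α β : Type*} [MeasurableSpace α] [MeasurableSpace β]
    (μ : Measure α) (φ : α → β) : Prop :=
  ∀ f : α → ℂ, MemLp f 2 μ →
    ∃ h : β → ℂ, MemLp h 2 (Measure.map φ μ) ∧ f =ᵐ[μ] fun x => h (φ x)

/-- The family `E(Λ, φ)` is complete in `L²(μ)`. -/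
def CompleteExp {α : Type*} [MeasurableSpace α] {d : ℕ}
    (μ : Measure α) (Λ : Set (Fin d → ℝ)) (φ : α → Fin d → ℝ) : Prop :=
  ∀ g : α → ℂ, MemLp g 2 μ →
    (∀ lam ∈ Λ, ∫ x, g x * (starRingEnd ℂ) (e2pi (dotp lam (φ x))) ∂μ = 0) →
    g =ᵐ[μ] 0

/-- The family `E(Λ, φ) = {x ↦ e^{2π i λ·φ(x)} : λ ∈ Λ}` is an orthogonal basis of `L²(μ)`:
a complete, pairwise orthogonal family of nonzero vectors. -/
def OrthBasisExp {α : Type*} [MeasurableSpace α] {d : ℕ}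
    (μ : Measure α) (Λ : Set (Fin d → ℝ)) (φ : α → Fin d → ℝ) : Prop :=
  (∀ lam ∈ Λ, ∀ lam' ∈ Λ, lam ≠ lam' →
      ∫ x, e2pi (dotp lam (φ x)) * (starRingEnd ℂ) (e2pi (dotp lam' (φ x))) ∂μ = 0) ∧
  (∀ lam ∈ Λ, (∫ x, ‖e2pi (dotp lam (φ x))‖ ^ 2 ∂μ) ≠ 0) ∧
  CompleteExp μ Λ φ

/-- `ν` is a spectral measure with spectrum `Λ`: the exponentials `E(Λ)` form an
orthogonal basis of `L²(ν)`. -/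
def IsSpectralMeasure {d : ℕ} (ν : Measure (Fin d → ℝ)) (Λ : Set (Fin d → ℝ)) : Prop :=
  OrthBasisExp ν Λ id

/-! Composition with `φ` is an isometry `L²(φ⋆μ) → L²(μ)` carrying `e_λ` to `e_λ ∘ φ`, so the
orthogonality relations and norms of `E(Λ)` and `E(Λ, φ)` coincide. If `E(Λ, φ)` is complete, the
closed range of this isometry contains a complete family, hence is all of `L²(μ)`: this is
essential injectivity, and completeness of `E(Λ)` follows by pulling functions back along `φ`.
Conversely, essential injectivity writes a function orthogonal to `E(Λ, φ)` as `h ∘ φ` with `h`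
orthogonal to `E(Λ)`, so `h = 0`. -/

lemma norm_e2pi (t : ℝ) : ‖e2pi t‖ = 1 := by
  rw [e2pi, show 2 * (π : ℂ) * Complex.I * t = ((2 * π * t : ℝ) : ℂ) * Complex.I by push_cast; ring,
    Complex.norm_exp_ofReal_mul_I]

lemma continuous_e2pi_dotp {d : ℕ} (lam : Fin d → ℝ) :
    Continuous fun y : Fin d → ℝ => e2pi (dotp lam y) := by
  unfold e2pi dotp
  fun_prop

lemma memLp_e2pi_dotp {d : ℕ} (ν : Measure (Fin d → ℝ)) [IsFiniteMeasure ν] (lam : Fin d → ℝ) :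
    MemLp (fun y => e2pi (dotp lam y)) 2 ν :=
  MemLp.of_bound (continuous_e2pi_dotp lam).aestronglyMeasurable 1
    (Eventually.of_forall fun _ => (norm_e2pi _).le)

lemma ae_eq_zero_of_comp_ae_eq_zero {α β E : Type*} [MeasurableSpace α] [MeasurableSpace β]
    [NormedAddCommGroup E] {μ : Measure α} {φ : α → β} (hφ : AEMeasurable φ μ) {g : β → E}
    (hg : AEStronglyMeasurable g (μ.map φ)) (h : g ∘ φ =ᵐ[μ] 0) : g =ᵐ[μ.map φ] 0 := by
  rw [← eLpNorm_eq_zero_iff hg one_ne_zero, eLpNorm_map_measure hg hφ, eLpNorm_congr_ae h,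
    eLpNorm_zero]

lemma essInj_of_surjective_compLp {α β : Type*} [MeasurableSpace α] [MeasurableSpace β]
    {μ : Measure α} {φ : α → β} (hφ : Measurable φ)
    (hsurj : Function.Surjective
      (Lp.compMeasurePreserving (E := ℂ) (p := 2) φ (hφ.measurePreserving μ))) :
    EssInj μ φ := by
  intro f hf
  obtain ⟨h, hh⟩ := hsurj (hf.toLp f)
  refine ⟨h, Lp.memLp h, hf.coeFn_toLp.symm.trans ?_⟩
  rw [← hh]
  exact Lp.coeFn_compMeasurePreserving h _

section Pushforward

variable {α : Type*} [MeasurableSpace α] {d : ℕ} {μ : Measure α} {Λ : Set (Fin d → ℝ)}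
  {φ : α → Fin d → ℝ}

lemma integral_map_mul_conj_e2pi (hφ : AEMeasurable φ μ) {h : (Fin d → ℝ) → ℂ}
    (hh : AEStronglyMeasurable h (μ.map φ)) (lam : Fin d → ℝ) :
    ∫ y, h y * starRingEnd ℂ (e2pi (dotp lam y)) ∂μ.map φ
      = ∫ x, h (φ x) * starRingEnd ℂ (e2pi (dotp lam (φ x))) ∂μ :=
  integral_map hφ (hh.mul (continuous_e2pi_dotp lam).star.aestronglyMeasurable)

lemma CompleteExp.map (hφ : AEMeasurable φ μ) (hc : CompleteExp μ Λ φ) :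
    CompleteExp (μ.map φ) Λ id := by
  intro g hg hperp
  refine ae_eq_zero_of_comp_ae_eq_zero hφ hg.1 (hc _ (hg.comp_of_map hφ) fun lam hlam => ?_)
  exact (integral_map_mul_conj_e2pi hφ hg.1 lam).symm.trans (hperp lam hlam)

lemma CompleteExp.of_map (hφ : AEMeasurable φ μ) (hinj : EssInj μ φ)
    (hc : CompleteExp (μ.map φ) Λ id) : CompleteExp μ Λ φ := by
  intro g hg hperp
  obtain ⟨h, hh, hgh⟩ := hinj g hg
  have hh0 : h =ᵐ[μ.map φ] 0 := hc h hh fun lam hlam => by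
    rw [← hperp lam hlam]
    exact (integral_map_mul_conj_e2pi hφ hh.1 lam).trans
      (integral_congr_ae (hgh.mono fun x hx => by simp only [hx]))
  exact hgh.trans (ae_eq_comp hφ hh0)

lemma CompleteExp.surjective_compLp [IsFiniteMeasure μ] (hφ : Measurable φ)
    (hc : CompleteExp μ Λ φ) :
    Function.Surjective
      (Lp.compMeasurePreserving (E := ℂ) (p := 2) φ (hφ.measurePreserving μ)) := by
  set T := Lp.compMeasurePreservingₗᵢ (E := ℂ) (p := 2) ℂ φ (hφ.measurePreserving μ)
  set K := LinearMap.range T.toLinearMap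
  have : CompleteSpace K := (LinearMap.coe_range T.toLinearMap ▸
    T.isometry.isUniformInducing.isComplete_range).completeSpace_coe
  have hK : Kᗮ = ⊥ := by
    refine (Submodule.eq_bot_iff _).2 fun w hw => Lp.ext ?_
    refine (hc w (Lp.memLp w) fun lam _ => ?_).trans (Lp.coeFn_zero ℂ 2 μ).symm
    set e := (memLp_e2pi_dotp (μ.map φ) lam).toLp
    have hTe : T e =ᵐ[μ] fun x => e2pi (dotp lam (φ x)) :=
      (Lp.coeFn_compMeasurePreserving e _).trans (ae_eq_comp hφ.aemeasurable (MemLp.coeFn_toLp _))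
    calc ∫ x, w x * starRingEnd ℂ (e2pi (dotp lam (φ x))) ∂μ
        = ∫ x, inner ℂ (T e x) (w x) ∂μ :=
          integral_congr_ae <| hTe.mono fun x hx => by
            dsimp only at hx ⊢
            rw [hx, RCLike.inner_apply', mul_comm]
      _ = inner ℂ (T e) w := (L2.inner_def _ _).symm
      _ = 0 := Submodule.inner_right_of_mem_orthogonal (LinearMap.mem_range_self _ e) hw
  intro f
  obtain ⟨g, hg⟩ := (Submodule.orthogonal_eq_bot_iff.1 hK).symm ▸ Submodule.mem_top (x := f)
  exact ⟨g, hg⟩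

end Pushforward

theorem statement3_general {d : ℕ} (μ : Measure (Fin d → ℝ)) [IsFiniteMeasure μ]
    (Λ : Set (Fin d → ℝ))
    (φ : (Fin d → ℝ) → (Fin d → ℝ)) (hφ : Measurable φ) :
    OrthBasisExp μ Λ φ ↔ (EssInj μ φ ∧ IsSpectralMeasure (Measure.map φ μ) Λ) := by
  have horth (lam lam' : Fin d → ℝ) :
      ∫ y, e2pi (dotp lam (id y)) * starRingEnd ℂ (e2pi (dotp lam' (id y))) ∂μ.map φ
        = ∫ x, e2pi (dotp lam (φ x)) * starRingEnd ℂ (e2pi (dotp lam' (φ x))) ∂μ :=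
    integral_map_mul_conj_e2pi hφ.aemeasurable (continuous_e2pi_dotp lam).aestronglyMeasurable lam'
  have hnorm (lam : Fin d → ℝ) :
      ∫ y, ‖e2pi (dotp lam (id y))‖ ^ 2 ∂μ.map φ = ∫ x, ‖e2pi (dotp lam (φ x))‖ ^ 2 ∂μ :=
    integral_map hφ.aemeasurable ((continuous_e2pi_dotp lam).norm.pow 2).aestronglyMeasurable
  simp only [IsSpectralMeasure, OrthBasisExp, horth, hnorm]
  constructor
  · rintro ⟨hortho, hnonzero, hc⟩
    exact ⟨essInj_of_surjective_compLp hφ (hc.surjective_compLp hφ), hortho, hnonzero,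
      hc.map hφ.aemeasurable⟩
  · rintro ⟨hinj, hortho, hnonzero, hc⟩
    exact ⟨hortho, hnonzero, hc.of_map hφ.aemeasurable hinj⟩

/-- `E(Λ, φ)` is an orthogonal basis for `L²(μ)` iff `φ` is `μ`-essentially
injective and `ν = φ⋆μ` is a spectral measure with spectrum `Λ`. -/
theorem statement3 {d : ℕ} (μ : Measure (Fin d → ℝ)) [IsFiniteMeasure μ]
    (Λ : Set (Fin d → ℝ)) (hΛ : Λ.Countable)
    (φ : (Fin d → ℝ) → (Fin d → ℝ)) (hφ : Measurable φ) :
    OrthBasisExp μ Λ φ ↔ (EssInj μ φ ∧ IsSpectralMeasure (Measure.map φ μ) Λ) :=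
  statement3_general μ Λ φ hφ
end
end

section
/- Let A₁, …, A_m be pairwise commuting real d×d matrices, let ℓ ∈ ℝ^d, and define φ : ℝ^m → ℝ^d by φ(t) = (exp(−Σ_{k=1}^m t_k A_k))ᵀ ℓ. Let Ω ⊂ ℝ^m be measurable with finite positive Lebesgue measure, let Λ ⊂ ℝ^d and Γ ⊂ ℝ^m be countable, and suppose: (a) the restriction of φ to Ω is essentially injective with respect to Lebesgue measure m_Ω on Ω; (b) the pushforward φ_*(m_Ω) is a frame-spectral measure with frame spectrum Λ, i.e. { y ↦ e^{2πi λ·y} : λ ∈ Λ } is a frame for L²(φ_*(m_Ω)); (c) the translates { Ω + γ : γ ∈ Γ } tile ℝ^m. Then the family { s ↦ e^{2πi φ(s−γ)·λ} 1_Ω(s−γ) : λ ∈ Λ, γ ∈ Γ } is a frame for L²(ℝ^m). -/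
/-! Translating by `γ` turns the coefficient of `f` against `genSys Ω φ λ γ` into the coefficient
of `f (· + γ)` restricted to `Ω` against `e^{2πi λ·φ}`. By essential injectivity that restriction
is `h ∘ φ` with `h ∈ L²(φ_* m_Ω)`, so the coefficient is the `λ`-th exponential coefficient of `h`
and `‖f (· + γ)‖_{L²(Ω)} = ‖h‖`. The frame inequality for `φ_* m_Ω` therefore holds for each
fixed `γ`, and summing over `γ` gives `‖f‖²` because the translates `Ω + γ` tile `ℝ^m`. -/

open MeasureTheory Filter Set
open scoped Real ENNReal Topology

noncomputable section

/-- The family `E(Λ, φ)` is a frame for `L²(μ)`. -/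
def FrameExp {α : Type*} [MeasurableSpace α] {d : ℕ}
    (μ : Measure α) (Λ : Set (Fin d → ℝ)) (φ : α → Fin d → ℝ) : Prop :=
  ∃ A B : ℝ, 0 < A ∧ A ≤ B ∧ ∀ f : α → ℂ, MemLp f 2 μ →
    (A * ∫ x, ‖f x‖ ^ 2 ∂μ) ≤
      (∑' lam : Λ, ‖∫ x, f x * (starRingEnd ℂ) (e2pi (dotp (lam : Fin d → ℝ) (φ x))) ∂μ‖ ^ 2) ∧
    (∑' lam : Λ, ‖∫ x, f x * (starRingEnd ℂ) (e2pi (dotp (lam : Fin d → ℝ) (φ x))) ∂μ‖ ^ 2) ≤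
      B * ∫ x, ‖f x‖ ^ 2 ∂μ

/-- The phase function `φ(t) = (exp(−Σ t_k A_k))ᵀ ℓ`. -/
def liePhase {d m : ℕ} (A : Fin m → Matrix (Fin d) (Fin d) ℝ) (ℓ : Fin d → ℝ)
    (t : Fin m → ℝ) : Fin d → ℝ :=
  (NormedSpace.exp (-(∑ k, t k • A k))).transpose.mulVec ℓ

/-- The generalized Gabor-type system `s ↦ e^{2π i φ(s−γ)·λ} 1_Ω(s−γ)`. -/
def genSys {d m : ℕ} (Ω : Set (Fin m → ℝ)) (φ : (Fin m → ℝ) → Fin d → ℝ)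
    (lam : Fin d → ℝ) (γ : Fin m → ℝ) (s : Fin m → ℝ) : ℂ :=
  e2pi (dotp (φ (s - γ)) lam) * Set.indicator Ω (fun _ => (1 : ℂ)) (s - γ)

theorem dotp_comm {d : ℕ} (a b : Fin d → ℝ) : dotp a b = dotp b a :=
  Finset.sum_congr rfl fun _ _ => mul_comm _ _

theorem continuous_conj_e2pi_dotp {d : ℕ} (lam : Fin d → ℝ) :
    Continuous fun y => starRingEnd ℂ (e2pi (dotp lam y)) := by
  unfold e2pi dotp
  fun_prop

-- `NormedSpace.exp` does not depend on a norm; one is chosen only to use `exp_continuous`.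
attribute [local instance] Matrix.linftyOpNormedRing Matrix.linftyOpNormedAlgebra in
theorem continuous_liePhase {d m : ℕ} (A : Fin m → Matrix (Fin d) (Fin d) ℝ) (ℓ : Fin d → ℝ) :
    Continuous (liePhase A ℓ) := by
  have hexp : Continuous fun t : Fin m → ℝ => NormedSpace.exp (-(∑ k, t k • A k)) :=
    NormedSpace.exp_continuous.comp (by fun_prop)
  refine continuous_pi fun i => ?_
  simp only [liePhase, Matrix.mulVec, dotProduct, Matrix.transpose_apply]
  exact continuous_finsetSum _ fun j _ => (hexp.matrix_elem j i).mul continuous_const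

theorem hasSum_setIntegral_add_right_of_tiles {G E : Type*} [AddGroup G] [MeasurableSpace G]
    [MeasurableAdd G] [NormedAddCommGroup E] [NormedSpace ℝ E] {μ : Measure G}
    [μ.IsAddRightInvariant] {Ω : Set G} (hΩ : MeasurableSet Ω) {Γ : Set G} (hΓ : Γ.Countable)
    (hdisj : ∀ γ ∈ Γ, ∀ γ' ∈ Γ, γ ≠ γ' → μ (((· + γ) '' Ω) ∩ ((· + γ') '' Ω)) = 0)
    (hcover : μ (univ \ ⋃ γ ∈ Γ, (· + γ) '' Ω) = 0) {g : G → E} (hg : Integrable g μ) :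
    HasSum (fun γ : Γ => ∫ s in Ω, g (s + γ) ∂μ) (∫ s, g s ∂μ) := by
  have : Countable Γ := hΓ.to_subtype
  have hU : (⋃ γ : Γ, (· + (γ : G)) '' Ω) =ᵐ[μ] (univ : Set G) := by
    rw [ae_eq_univ, compl_eq_univ_sdiff, iUnion_coe_set]
    exact hcover
  have hsum := hasSum_integral_iUnion_ae (f := g) (s := fun γ : Γ => (· + (γ : G)) '' Ω)
    (fun γ => ((measurableEmbedding_addRight _).measurableSet_image.2 hΩ).nullMeasurableSet)
    (fun γ γ' hne => hdisj _ γ.2 _ γ'.2 (Subtype.coe_injective.ne hne)) hg.integrableOn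
  rw [setIntegral_congr_set hU, setIntegral_univ] at hsum
  convert hsum using 2 with γ
  exact ((measurePreserving_add_right μ γ).setIntegral_image_emb
    (measurableEmbedding_addRight _) _ _).symm

theorem integral_norm_sq_map_of_ae_eq_comp {α β E : Type*} [MeasurableSpace α]
    [MeasurableSpace β] [NormedAddCommGroup E] {μ : Measure α} {φ : α → β} (hφ : Measurable φ)
    {g : α → E} {h : β → E} (hh : AEStronglyMeasurable h (μ.map φ))
    (hgh : g =ᵐ[μ] fun x => h (φ x)) :
    ∫ x, ‖g x‖ ^ 2 ∂μ = ∫ y, ‖h y‖ ^ 2 ∂(μ.map φ) := by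
  rw [integral_map hφ.aemeasurable (by fun_prop)]
  exact integral_congr_ae (hgh.fun_comp fun z => ‖z‖ ^ 2)

theorem integral_mul_conj_genSys {d m : ℕ} {Ω : Set (Fin m → ℝ)} (hΩ : MeasurableSet Ω)
    {φ : (Fin m → ℝ) → Fin d → ℝ} (hφ : Measurable φ) {f : (Fin m → ℝ) → ℂ}
    {γ : Fin m → ℝ} {h : (Fin d → ℝ) → ℂ}
    (hh : AEStronglyMeasurable h ((volume.restrict Ω).map φ))
    (hfh : (fun u => f (u + γ)) =ᵐ[volume.restrict Ω] fun u => h (φ u)) (lam : Fin d → ℝ) :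
    ∫ s, f s * starRingEnd ℂ (genSys Ω φ lam γ s) =
      ∫ y, h y * starRingEnd ℂ (e2pi (dotp lam y)) ∂((volume.restrict Ω).map φ) := by
  calc ∫ s, f s * starRingEnd ℂ (genSys Ω φ lam γ s)
      = ∫ u, f (u + γ) * starRingEnd ℂ (genSys Ω φ lam γ (u + γ)) :=
        (integral_add_right_eq_self _ γ).symm
    _ = ∫ u in Ω, f (u + γ) * starRingEnd ℂ (e2pi (dotp lam (φ u))) := by
        rw [← integral_indicator hΩ]
        congr 1
        funext u
        by_cases hu : u ∈ Ω <;> simp [genSys, hu, dotp_comm]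
    _ = ∫ u in Ω, h (φ u) * starRingEnd ℂ (e2pi (dotp lam (φ u))) :=
        integral_congr_ae (hfh.mul (EventuallyEq.refl _ _))
    _ = _ := (integral_map hφ.aemeasurable
        (hh.mul (continuous_conj_e2pi_dotp lam).aestronglyMeasurable)).symm

-- A real `∑'` of a non-summable family is `0`; the lower frame bound with `c > 0` rules this out.
theorem summable_norm_sq_integral_mul_of_lower_bound {β ι : Type*} [MeasurableSpace β]
    {ν : Measure β} {h : β → ℂ} (hh : MemLp h 2 ν) (e : ι → β → ℂ) {c : ℝ} (hc : 0 < c)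
    (hlow : c * ∫ y, ‖h y‖ ^ 2 ∂ν ≤ ∑' i, ‖∫ y, h y * e i y ∂ν‖ ^ 2) :
    Summable fun i => ‖∫ y, h y * e i y ∂ν‖ ^ 2 := by
  by_contra hns
  rw [tsum_eq_zero_of_not_summable hns] at hlow
  have hnorm : ∫ y, ‖h y‖ ^ 2 ∂ν = 0 :=
    le_antisymm (nonpos_of_mul_nonpos_right hlow hc) (integral_nonneg fun _ => sq_nonneg _)
  have hzero : h =ᵐ[ν] 0 := by
    filter_upwards [(integral_eq_zero_iff_of_nonneg (fun _ => sq_nonneg _)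
      ((memLp_two_iff_integrable_sq_norm hh.1).1 hh)).1 hnorm] with y hy
    simpa using hy
  refine hns (summable_zero.congr fun i => ?_)
  rw [integral_eq_zero_of_ae (by filter_upwards [hzero] with y hy; simp [hy])]
  simp

theorem tsum_tsum_mem_Icc_of_hasSum {ι κ : Type*} {F : ι → κ → ℝ} {I : κ → ℝ} {A B T : ℝ}
    (hF0 : ∀ i k, 0 ≤ F i k) (hI : HasSum I T)
    (hF : ∀ k, Summable (fun i => F i k) ∧ ∑' i, F i k ∈ Icc (A * I k) (B * I k)) :
    ∑' i, ∑' k, F i k ∈ Icc (A * T) (B * T) := by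
  have hcol : Summable fun k => ∑' i, F i k :=
    .of_nonneg_of_le (fun k => tsum_nonneg fun i => hF0 i k) (fun k => (hF k).2.2)
      (hI.summable.mul_left B)
  have hswap : ∑' i, ∑' k, F i k = ∑' k, ∑' i, F i k :=
    Summable.tsum_comm ((summable_prod_of_nonneg fun p => hF0 p.2 p.1).2
      ⟨fun k => (hF k).1, hcol⟩)
  rw [hswap, ← hI.tsum_eq, ← tsum_mul_left, ← tsum_mul_left]
  exact ⟨(hI.summable.mul_left A).tsum_le_tsum (fun k => (hF k).2.1) hcol,
    hcol.tsum_le_tsum (fun k => (hF k).2.2) (hI.summable.mul_left B)⟩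

theorem statement19_general {d m : ℕ} (A : Fin m → Matrix (Fin d) (Fin d) ℝ)
    (ℓ : Fin d → ℝ)
    (φ : (Fin m → ℝ) → Fin d → ℝ) (hφ : φ = liePhase A ℓ)
    (Ω : Set (Fin m → ℝ)) (hΩm : MeasurableSet Ω)
    (Λ : Set (Fin d → ℝ))
    (Γ : Set (Fin m → ℝ)) (hΓ : Γ.Countable)
    (ha : EssInj (volume.restrict Ω) φ)
    (hb : FrameExp (Measure.map φ (volume.restrict Ω)) Λ id)
    (hc₁ : ∀ γ ∈ Γ, ∀ γ' ∈ Γ, γ ≠ γ' →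
      volume (((fun x => x + γ) '' Ω) ∩ ((fun x => x + γ') '' Ω)) = 0)
    (hc₂ : volume (Set.univ \ ⋃ γ ∈ Γ, (fun x => x + γ) '' Ω) = 0) :
    ∃ C D : ℝ, 0 < C ∧ C ≤ D ∧ ∀ f : (Fin m → ℝ) → ℂ, MemLp f 2 volume →
      (C * ∫ s, ‖f s‖ ^ 2) ≤
        (∑' lam : Λ, ∑' γ : Γ,
          ‖∫ s, f s * (starRingEnd ℂ) (genSys Ω φ (lam : Fin d → ℝ) (γ : Fin m → ℝ) s)‖ ^ 2) ∧
      (∑' lam : Λ, ∑' γ : Γ,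
          ‖∫ s, f s * (starRingEnd ℂ) (genSys Ω φ (lam : Fin d → ℝ) (γ : Fin m → ℝ) s)‖ ^ 2) ≤
        D * ∫ s, ‖f s‖ ^ 2 := by
  obtain ⟨A₀, B₀, hA₀, hAB, hframe⟩ := hb
  have hφm : Measurable φ := hφ ▸ (continuous_liePhase A ℓ).measurable
  refine ⟨A₀, B₀, hA₀, hAB, fun f hf => ?_⟩
  have htiles := hasSum_setIntegral_add_right_of_tiles hΩm hΓ hc₁ hc₂
    ((memLp_two_iff_integrable_sq_norm hf.1).1 hf)
  refine tsum_tsum_mem_Icc_of_hasSum (fun _ _ => sq_nonneg _) htiles fun γ => ?_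
  obtain ⟨h, hh, hfh⟩ := ha (fun u => f (u + γ))
    ((hf.comp_measurePreserving (measurePreserving_add_right volume (γ : Fin m → ℝ))).restrict Ω)
  have hbounds := hframe h hh
  simp only [id_eq] at hbounds
  simp only [integral_mul_conj_genSys hΩm hφm hh.1 hfh,
    integral_norm_sq_map_of_ae_eq_comp hφm hh.1 hfh]
  exact ⟨summable_norm_sq_integral_mul_of_lower_bound hh _ hA₀ hbounds.1, hbounds⟩

/-- Discretization of a unitary representation, frame version: if
`φ(t) = (exp(−Σ t_k A_k))ᵀ ℓ` (with `A₁,…,A_m` pairwise commuting), `φ` is essentially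
injective on `Ω`, the pushforward `φ⋆(m_Ω)` is a frame-spectral measure with frame spectrum
`Λ`, and the translates `Ω + γ`, `γ ∈ Γ`, tile `ℝ^m`, then
`{ s ↦ e^{2π i φ(s−γ)·λ} 1_Ω(s−γ) : λ ∈ Λ, γ ∈ Γ }` is a frame for `L²(ℝ^m)`. -/
theorem statement19 {d m : ℕ} (A : Fin m → Matrix (Fin d) (Fin d) ℝ)
    (hcomm : ∀ i j, A i * A j = A j * A i) (ℓ : Fin d → ℝ)
    (φ : (Fin m → ℝ) → Fin d → ℝ) (hφ : φ = liePhase A ℓ)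
    (Ω : Set (Fin m → ℝ)) (hΩm : MeasurableSet Ω)
    (hΩpos : 0 < volume Ω) (hΩfin : volume Ω < ⊤)
    (Λ : Set (Fin d → ℝ)) (hΛ : Λ.Countable)
    (Γ : Set (Fin m → ℝ)) (hΓ : Γ.Countable)
    (ha : EssInj (volume.restrict Ω) φ)
    (hb : FrameExp (Measure.map φ (volume.restrict Ω)) Λ id)
    (hc₁ : ∀ γ ∈ Γ, ∀ γ' ∈ Γ, γ ≠ γ' →
      volume (((fun x => x + γ) '' Ω) ∩ ((fun x => x + γ') '' Ω)) = 0)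
    (hc₂ : volume (Set.univ \ ⋃ γ ∈ Γ, (fun x => x + γ) '' Ω) = 0) :
    ∃ C D : ℝ, 0 < C ∧ C ≤ D ∧ ∀ f : (Fin m → ℝ) → ℂ, MemLp f 2 volume →
      (C * ∫ s, ‖f s‖ ^ 2) ≤
        (∑' lam : Λ, ∑' γ : Γ,
          ‖∫ s, f s * (starRingEnd ℂ) (genSys Ω φ (lam : Fin d → ℝ) (γ : Fin m → ℝ) s)‖ ^ 2) ∧
      (∑' lam : Λ, ∑' γ : Γ,
          ‖∫ s, f s * (starRingEnd ℂ) (genSys Ω φ (lam : Fin d → ℝ) (γ : Fin m → ℝ) s)‖ ^ 2) ≤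
        D * ∫ s, ‖f s‖ ^ 2 :=
  statement19_general A ℓ φ hφ Ω hΩm Λ Γ hΓ ha hb hc₁ hc₂
end
end
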